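/- arXiv:1011.2258 — 3 statements merged into one kernel-verified Lean document; each statement's English description precedes it below -/
import Mathlib

section
/- If r·cos θ ≤ ε < r, then the complement ℝ² \ S_ε has exactly one connected component that is a bounded set, and the origin (0,0) belongs to that bounded component. -/
open Metric Set Bornology Real
open scoped RealInnerProductSpace

/-!
The component of the origin stays in the region `‖p‖ < r, p 1 < r sin θ` cut off by the chord
of the arc: each point of the chord is within `r cos θ ≤ ε` of an endpoint of the arc, so the
boundary of this region lies in `S_ε`.

Any other point `p` of the complement is either outside that region, where a ray from `p` (radial
if `‖p‖ ≥ r`, vertical if `p` is above the chord) moves away from every point of the arc and so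
makes the component of `p` unbounded; or it is inside, and then it joins the origin. If the radial
projection of `p` lies on the arc, the whole ball `‖z‖ ≤ ‖p‖` avoids `S_ε`. Otherwise `p` lies in
the cone spanned by the nearer endpoint `e` of the arc and the vertical direction; there `e` is
the nearest point of the arc, and moving down to the segment `[0, e]` only increases the distance
to `e`, so one reaches a point whose radial projection is `e`.
-/

section Thickening

variable {E : Type*} [NormedAddCommGroup E] {S : Set E} {r ε : ℝ}

theorem mem_compl_cthickening_iff_forall_lt_dist (hS : IsCompact S) (hε : 0 ≤ ε) {z : E} :
    z ∈ (cthickening ε S)ᶜ ↔ ∀ q ∈ S, ε < dist z q := by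
  simp [hS.cthickening_eq_biUnion_closedBall hε]

theorem not_isBounded_connectedComponentIn_of_ray [NormedSpace ℝ E] {F : Set E} {p v : E}
    (hv : v ≠ 0) (hray : ∀ t : ℝ, 0 ≤ t → p + t • v ∈ F) :
    ¬IsBounded (connectedComponentIn F p) := by
  have hsub : (fun t : ℝ => p + t • v) '' Ici 0 ⊆ connectedComponentIn F p :=
    (isPreconnected_Ici.image _ (by fun_prop)).subset_connectedComponentIn
      ⟨0, mem_Ici.2 le_rfl, by simp⟩ (by rintro _ ⟨t, ht, rfl⟩; exact hray t ht)
  intro hbdd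
  obtain ⟨R, hR⟩ := (hbdd.subset hsub).subset_closedBall p
  have hv' : 0 < ‖v‖ := norm_pos_iff.2 hv
  have hfar := hR ⟨(|R| + 1) / ‖v‖, mem_Ici.2 (by positivity), rfl⟩
  rw [mem_closedBall, dist_self_add_left, norm_smul, Real.norm_of_nonneg (by positivity),
    div_mul_cancel₀ _ hv'.ne'] at hfar
  linarith [le_abs_self R]

theorem closedBall_subset_compl_cthickening (hS : IsCompact S) (hSr : S ⊆ sphere 0 r)
    (hε : 0 ≤ ε) {ρ : ℝ} (hρ : ρ + ε < r) :
    closedBall 0 ρ ⊆ (cthickening ε S)ᶜ := by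
  intro z hz
  refine (mem_compl_cthickening_iff_forall_lt_dist hS hε).2 fun q hq => ?_
  have hq' : ‖q‖ = r := mem_sphere_zero_iff_norm.1 (hSr hq)
  have := norm_sub_norm_le q z
  rw [mem_closedBall_zero_iff] at hz
  rw [dist_eq_norm, norm_sub_rev]
  linarith

theorem closedBall_subset_connectedComponentIn_compl_cthickening [NormedSpace ℝ E]
    (hS : IsCompact S) (hSr : S ⊆ sphere 0 r) (hε : 0 ≤ ε) {ρ : ℝ} (hρ0 : 0 ≤ ρ)
    (hρ : ρ + ε < r) : closedBall 0 ρ ⊆ connectedComponentIn (cthickening ε S)ᶜ 0 :=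
  (convex_closedBall 0 ρ).isPreconnected.subset_connectedComponentIn (mem_closedBall_self hρ0)
    (closedBall_subset_compl_cthickening hS hSr hε hρ)

theorem norm_smul_add_lt_of_smul_mem_compl_cthickening [NormedSpace ℝ E]
    (hSr : S ⊆ sphere 0 r) {e : E} (he : e ∈ S) {α : ℝ} (hα0 : 0 ≤ α) (hα1 : α ≤ 1)
    (hαe : α • e ∈ (cthickening ε S)ᶜ) : ‖α • e‖ + ε < r := by
  have hfar : ε < dist (α • e) e :=
    not_le.1 fun h => hαe (mem_cthickening_of_dist_le _ e ε S he h)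
  have he' : ‖e‖ = r := mem_sphere_zero_iff_norm.1 (hSr he)
  rw [dist_eq_norm, show α • e - e = (α - 1) • e by rw [sub_smul, one_smul], norm_smul,
    Real.norm_eq_abs, abs_of_nonpos (by linarith)] at hfar
  rw [norm_smul, Real.norm_of_nonneg hα0]
  linarith

end Thickening

section Inner

variable {E : Type*} [NormedAddCommGroup E] [InnerProductSpace ℝ E] {S : Set E} {ε : ℝ}

theorem dist_le_dist_add_smul_of_inner_nonneg {p q v : E} (h : 0 ≤ ⟪p - q, v⟫) {t : ℝ}
    (ht : 0 ≤ t) : dist p q ≤ dist (p + t • v) q := by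
  rw [dist_eq_norm, dist_eq_norm, add_sub_right_comm,
    ← sq_le_sq₀ (norm_nonneg _) (norm_nonneg _), norm_add_sq_real, real_inner_smul_right]
  nlinarith [sq_nonneg ‖t • v‖]

theorem dist_smul_add_smul_le_dist {e u q : E} (hq : ‖q‖ = ‖e‖) (hu : ⟪u, q⟫ ≤ ⟪u, e⟫)
    {α β : ℝ} (hα : 0 ≤ α) (hβ : 0 ≤ β) :
    dist (α • e + β • u) e ≤ dist (α • e + β • u) q := by
  have hinner : ⟪α • e + β • u, q⟫ ≤ ⟪α • e + β • u, e⟫ := by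
    have hCS := real_inner_le_norm e q
    rw [hq, ← real_inner_self_eq_norm_mul_norm] at hCS
    simp only [inner_add_left, real_inner_smul_left]
    gcongr
  rw [dist_eq_norm, dist_eq_norm, ← sq_le_sq₀ (norm_nonneg _) (norm_nonneg _),
    norm_sub_sq_real, norm_sub_sq_real, hq]
  linarith

theorem not_isBounded_connectedComponentIn_compl_cthickening (hS : IsCompact S)
    (hε : 0 ≤ ε) {p u : E} (hu : u ≠ 0) (hp : p ∈ (cthickening ε S)ᶜ)
    (hSu : ∀ q ∈ S, ⟪q, u⟫ ≤ ⟪p, u⟫) :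
    ¬IsBounded (connectedComponentIn (cthickening ε S)ᶜ p) := by
  rw [mem_compl_cthickening_iff_forall_lt_dist hS hε] at hp
  refine not_isBounded_connectedComponentIn_of_ray hu fun t ht =>
    (mem_compl_cthickening_iff_forall_lt_dist hS hε).2 fun q hq => ?_
  refine (hp q hq).trans_le (dist_le_dist_add_smul_of_inner_nonneg ?_ ht)
  rw [inner_sub_left]
  linarith [hSu q hq]

/-- `e` is a point of `S` nearest to every point of the cone spanned by `e` and `u`; inside this
cone the distance to `e` grows as one moves in the direction `-u` below the level of `e`. -/
theorem smul_add_smul_mem_compl_cthickening (hS : IsCompact S) (hε : 0 ≤ ε) {e u : E}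
    (he : e ∈ S) (hSe : ∀ q ∈ S, ‖q‖ = ‖e‖ ∧ ⟪u, q⟫ ≤ ⟪u, e⟫) {α β β₀ : ℝ} (hα : 0 ≤ α)
    (hβ : 0 ≤ β) (hββ₀ : β ≤ β₀) (hβ₀ : ⟪u, α • e + β₀ • u⟫ ≤ ⟪u, e⟫)
    (hp : α • e + β₀ • u ∈ (cthickening ε S)ᶜ) : α • e + β • u ∈ (cthickening ε S)ᶜ := by
  rw [mem_compl_cthickening_iff_forall_lt_dist hS hε] at hp ⊢
  intro q hq
  have hdown : α • e + β • u = (α • e + β₀ • u) + (β₀ - β) • (-u) := by module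
  calc ε < dist (α • e + β₀ • u) e := hp e he
    _ ≤ dist (α • e + β • u) e := by
      rw [hdown]
      refine dist_le_dist_add_smul_of_inner_nonneg ?_ (by linarith)
      rw [inner_neg_right, inner_sub_left, real_inner_comm u, real_inner_comm u e]
      linarith
    _ ≤ dist (α • e + β • u) q := dist_smul_add_smul_le_dist (hSe q hq).1 (hSe q hq).2 hα hβ

end Inner

theorem exists_sq_eq_one_and_eq_mul_abs (x : ℝ) : ∃ σ : ℝ, σ ^ 2 = 1 ∧ x = σ * |x| := by
  rcases le_or_gt 0 x with hx | hx
  · exact ⟨1, one_pow 2, by rw [abs_of_nonneg hx, one_mul]⟩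
  · exact ⟨-1, by norm_num, by rw [abs_of_neg hx]; ring⟩

local notation "ℝ²" => EuclideanSpace ℝ (Fin 2)

theorem norm_sq_eq_fin_two (p : ℝ²) : ‖p‖ ^ 2 = p 0 ^ 2 + p 1 ^ 2 := by
  simp [EuclideanSpace.real_norm_sq_eq, Fin.sum_univ_two]

def arc (r θ : ℝ) : Set ℝ² := {p | ‖p‖ = r ∧ p 1 ≤ r * sin θ}

section Arc

variable {r θ ε : ℝ}

theorem arc_subset_sphere : arc r θ ⊆ sphere 0 r := fun _ hp => mem_sphere_zero_iff_norm.2 hp.1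

theorem isCompact_arc : IsCompact (arc r θ) :=
  (isCompact_sphere 0 r).of_isClosed_subset
    ((isClosed_eq continuous_norm continuous_const).inter
      (isClosed_le (by fun_prop : Continuous fun p : ℝ² => p 1) continuous_const))
    arc_subset_sphere

theorem endpoint_mem_arc (hr : 0 ≤ r) {σ : ℝ} (hσ : σ ^ 2 = 1) :
    !₂[σ * (r * cos θ), r * sin θ] ∈ arc r θ := by
  refine ⟨?_, by simp⟩
  rw [← sq_eq_sq₀ (norm_nonneg _) hr, norm_sq_eq_fin_two]
  simp only [Matrix.cons_val_zero, Matrix.cons_val_one]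
  linear_combination r ^ 2 * cos θ ^ 2 * hσ + r ^ 2 * sin_sq_add_cos_sq θ

theorem mem_cthickening_arc_of_apply_one_eq (hr : 0 ≤ r) (hc : 0 ≤ cos θ)
    (hε : r * cos θ ≤ ε) {z : ℝ²} (hz : ‖z‖ ≤ r) (hz1 : z 1 = r * sin θ) :
    z ∈ cthickening ε (arc r θ) := by
  obtain ⟨σ, hσ, hzσ⟩ := exists_sq_eq_one_and_eq_mul_abs (z 0)
  refine mem_cthickening_of_dist_le z _ ε _ (endpoint_mem_arc hr hσ) ?_
  have hrc : 0 ≤ r * cos θ := by positivity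
  have hz0 : |z 0| ≤ r * cos θ := by
    have hz2 : ‖z‖ ^ 2 ≤ r ^ 2 := pow_le_pow_left₀ (norm_nonneg z) hz 2
    rw [norm_sq_eq_fin_two, hz1] at hz2
    rw [← sq_le_sq₀ (abs_nonneg _) hrc, sq_abs]
    linear_combination hz2 - r ^ 2 * sin_sq_add_cos_sq θ
  rw [dist_eq_norm, ← sq_le_sq₀ (norm_nonneg _) (hrc.trans hε), norm_sq_eq_fin_two]
  simp only [PiLp.sub_apply, Matrix.cons_val_zero, Matrix.cons_val_one, hz1]
  calc (z 0 - σ * (r * cos θ)) ^ 2 + (r * sin θ - r * sin θ) ^ 2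
      = σ ^ 2 * (r * cos θ - |z 0|) ^ 2 := by nth_rewrite 1 [hzσ]; ring
    _ ≤ ε ^ 2 := by rw [hσ, one_mul]; gcongr; linarith [abs_nonneg (z 0)]

theorem zero_mem_compl_cthickening_arc (hε0 : 0 ≤ ε) (hε : ε < r) :
    (0 : ℝ²) ∈ (cthickening ε (arc r θ))ᶜ :=
  closedBall_subset_compl_cthickening isCompact_arc arc_subset_sphere hε0 (by linarith)
    (mem_closedBall_self le_rfl)

theorem connectedComponentIn_zero_subset_ball_inter (hr : 0 < r) (hc : 0 ≤ cos θ)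
    (hs : 0 < sin θ) (hε1 : r * cos θ ≤ ε) (hε2 : ε < r) :
    connectedComponentIn (cthickening ε (arc r θ))ᶜ 0 ⊆ ball 0 r ∩ {p | p 1 < r * sin θ} := by
  have h0 := zero_mem_compl_cthickening_arc (θ := θ) ((by positivity : 0 ≤ r * cos θ).trans hε1) hε2
  have hcont : Continuous fun p : ℝ² => p 1 := by fun_prop
  refine isPreconnected_connectedComponentIn.subset_of_closure_inter_subset
    (isOpen_ball.inter (isOpen_lt hcont continuous_const))
    ⟨0, mem_connectedComponentIn h0, mem_ball_self hr, by simpa using mul_pos hr hs⟩ ?_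
  rintro z ⟨hzcl, hzC⟩
  have hzT := connectedComponentIn_subset _ _ hzC
  obtain ⟨hz, hz1⟩ : ‖z‖ ≤ r ∧ z 1 ≤ r * sin θ := by
    simpa using (closure_inter_subset_inter_closure _ _).trans (inter_subset_inter
      closure_ball_subset_closedBall (closure_lt_subset_le hcont continuous_const)) hzcl
  exact ⟨mem_ball_zero_iff.2 (hz.lt_of_ne fun h => hzT (self_subset_cthickening _ ⟨h, hz1⟩)),
    hz1.lt_of_ne fun h => hzT (mem_cthickening_arc_of_apply_one_eq hr.le hc hε1 hz h)⟩

theorem not_isBounded_connectedComponentIn_of_le_norm (hr : 0 < r) (hε : 0 ≤ ε) {p : ℝ²}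
    (hp : p ∈ (cthickening ε (arc r θ))ᶜ) (hpr : r ≤ ‖p‖) :
    ¬IsBounded (connectedComponentIn (cthickening ε (arc r θ))ᶜ p) :=
  not_isBounded_connectedComponentIn_compl_cthickening isCompact_arc hε
    (norm_pos_iff.1 (hr.trans_le hpr)) hp fun q hq => by
      rw [real_inner_self_eq_norm_mul_norm]
      exact (real_inner_le_norm q p).trans (by rw [hq.1]; gcongr)

theorem not_isBounded_connectedComponentIn_of_le_apply_one (hε : 0 ≤ ε) {p : ℝ²}
    (hp : p ∈ (cthickening ε (arc r θ))ᶜ) (hp1 : r * sin θ ≤ p 1) :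
    ¬IsBounded (connectedComponentIn (cthickening ε (arc r θ))ᶜ p) :=
  not_isBounded_connectedComponentIn_compl_cthickening isCompact_arc hε
    (u := EuclideanSpace.single 1 1) (by simp) hp fun q hq => by
      simpa [EuclideanSpace.inner_single_right] using hq.2.trans hp1

theorem mem_connectedComponentIn_zero_of_apply_one_le (hr : 0 < r) (hε : 0 ≤ ε) {p : ℝ²}
    (hp : p ∈ (cthickening ε (arc r θ))ᶜ) (hpr : ‖p‖ < r) (hp1 : p 1 ≤ ‖p‖ * sin θ) :
    p ∈ connectedComponentIn (cthickening ε (arc r θ))ᶜ 0 := by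
  rcases eq_or_ne p 0 with rfl | hp0
  · exact mem_connectedComponentIn hp
  have hpn : 0 < ‖p‖ := norm_pos_iff.2 hp0
  set e := (r / ‖p‖) • p
  have he : e ∈ arc r θ := by
    refine ⟨by rw [norm_smul, norm_div, Real.norm_of_nonneg hr.le, norm_norm,
      div_mul_cancel₀ _ hpn.ne'], ?_⟩
    simp only [e, PiLp.smul_apply, smul_eq_mul]
    rw [div_mul_eq_mul_div, div_le_iff₀ hpn]
    nlinarith
  have hpe : p = (‖p‖ / r) • e := by
    rw [smul_smul, div_mul_div_cancel₀ hr.ne', div_self hpn.ne', one_smul]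
  have hlt := norm_smul_add_lt_of_smul_mem_compl_cthickening arc_subset_sphere he
    (by positivity) (div_le_one_of_le₀ hpr.le hr.le) (hpe ▸ hp)
  rw [← hpe] at hlt
  exact closedBall_subset_connectedComponentIn_compl_cthickening isCompact_arc
    arc_subset_sphere hε (norm_nonneg p) hlt (mem_closedBall_zero_iff.2 le_rfl)

theorem abs_apply_zero_mul_sin_le_of_norm_mul_sin_lt (hc : 0 < cos θ) (hs : 0 < sin θ)
    {p : ℝ²} (hp1 : ‖p‖ * sin θ < p 1) : |p 0| * sin θ ≤ p 1 * cos θ := by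
  have hsq : (‖p‖ * sin θ) ^ 2 ≤ p 1 ^ 2 := pow_le_pow_left₀ (by positivity) hp1.le 2
  rw [mul_pow, norm_sq_eq_fin_two] at hsq
  have hp1' : 0 < p 1 := (by positivity : 0 ≤ ‖p‖ * sin θ).trans_lt hp1
  rw [← sq_le_sq₀ (by positivity) (mul_pos hp1' hc).le, mul_pow, mul_pow, sq_abs]
  linear_combination hsq - p 1 ^ 2 * sin_sq_add_cos_sq θ

theorem mem_connectedComponentIn_zero_of_lt_apply_one (hr : 0 < r) (hc : 0 < cos θ)
    (hs : 0 < sin θ) (hε : 0 ≤ ε) {p : ℝ²} (hp : p ∈ (cthickening ε (arc r θ))ᶜ)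
    (hp1 : ‖p‖ * sin θ < p 1) (htop : p 1 < r * sin θ) :
    p ∈ connectedComponentIn (cthickening ε (arc r θ))ᶜ 0 := by
  have hcone := abs_apply_zero_mul_sin_le_of_norm_mul_sin_lt hc hs hp1
  obtain ⟨σ, hσ, hpσ⟩ := exists_sq_eq_one_and_eq_mul_abs (p 0)
  set e : ℝ² := !₂[σ * (r * cos θ), r * sin θ]
  have he : e ∈ arc r θ := endpoint_mem_arc hr.le hσ
  set u : ℝ² := EuclideanSpace.single 1 1
  set α := |p 0| / (r * cos θ)
  set β₀ := p 1 - α * (r * sin θ)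
  have hα0 : 0 ≤ α := by positivity
  have hα1 : α ≤ 1 := div_le_one_of_le₀ (by nlinarith) (by positivity)
  have hβ₀ : 0 ≤ β₀ := by
    rw [sub_nonneg, div_mul_eq_mul_div, div_le_iff₀ (by positivity)]
    nlinarith
  have hpαβ : p = α • e + β₀ • u := by
    ext i
    fin_cases i
    · have hrc : r * cos θ ≠ 0 := by positivity
      simp only [Fin.zero_eta, Fin.isValue, PiLp.add_apply, PiLp.smul_apply, smul_eq_mul,
        Matrix.cons_val_zero, ne_eq, zero_ne_one, not_false_eq_true, PiLp.single_eq_of_ne,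
        mul_zero, add_zero, α, e, u]
      field_simp
      linear_combination hpσ
    · simp [e, u, β₀]
  have hSe : ∀ q ∈ arc r θ, ‖q‖ = ‖e‖ ∧ ⟪u, q⟫ ≤ ⟪u, e⟫ := fun q hq =>
    ⟨hq.1.trans he.1.symm, by simpa [u, e, EuclideanSpace.inner_single_left] using hq.2⟩
  have hseg : ∀ β ∈ Icc 0 β₀, α • e + β • u ∈ (cthickening ε (arc r θ))ᶜ := fun β hβ =>
    smul_add_smul_mem_compl_cthickening isCompact_arc hε he hSe hα0 hβ.1 hβ.2
      (by rw [← hpαβ]; simpa [u, e, EuclideanSpace.inner_single_left] using htop.le)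
      (hpαβ ▸ hp)
  have hw : α • e ∈ connectedComponentIn (cthickening ε (arc r θ))ᶜ 0 := by
    have hw' : α • e ∈ (cthickening ε (arc r θ))ᶜ := by simpa using hseg 0 ⟨le_rfl, hβ₀⟩
    exact closedBall_subset_connectedComponentIn_compl_cthickening isCompact_arc
      arc_subset_sphere hε (norm_nonneg _)
      (norm_smul_add_lt_of_smul_mem_compl_cthickening arc_subset_sphere he hα0 hα1 hw')
      (mem_closedBall_zero_iff.2 le_rfl)
  rw [connectedComponentIn_eq hw]
  refine (isPreconnected_Icc.image (fun β : ℝ => α • e + β • u) (by fun_prop)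
    |>.subset_connectedComponentIn ⟨0, ⟨le_rfl, hβ₀⟩, by simp⟩ ?_) ⟨β₀, ⟨hβ₀, le_rfl⟩, hpαβ.symm⟩
  rintro _ ⟨β, hβ, rfl⟩
  exact hseg β hβ

end Arc

/-- If `r·cos θ ≤ ε < r`, then the complement of the closed
`ε`-neighborhood of the arc has exactly one connected component that is a bounded
set, and the origin belongs to that bounded component. -/
theorem arc_complement_unique_bounded_component
    (r θ ε : ℝ) (hr : 0 < r) (hθ : θ ∈ Set.Ioo 0 (Real.pi / 2))
    (S : Set (EuclideanSpace ℝ (Fin 2)))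
    (hS : S = {p : EuclideanSpace ℝ (Fin 2) | ‖p‖ = r ∧ p 1 ≤ r * Real.sin θ})
    (hε1 : r * Real.cos θ ≤ ε) (hε2 : ε < r) :
    (∃! C : Set (EuclideanSpace ℝ (Fin 2)),
        (∃ p ∈ (Metric.cthickening ε S)ᶜ,
          C = connectedComponentIn (Metric.cthickening ε S)ᶜ p) ∧
        Bornology.IsBounded C) ∧
      (0 : EuclideanSpace ℝ (Fin 2)) ∈ (Metric.cthickening ε S)ᶜ ∧
      Bornology.IsBounded
        (connectedComponentIn (Metric.cthickening ε S)ᶜ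
          (0 : EuclideanSpace ℝ (Fin 2))) := by
  obtain rfl : S = arc r θ := hS
  have hc : 0 < cos θ := cos_pos_of_mem_Ioo ⟨by linarith [hθ.1, pi_pos], hθ.2⟩
  have hs : 0 < sin θ := sin_pos_of_pos_of_lt_pi hθ.1 (by linarith [hθ.2, pi_pos])
  have hε0 : 0 ≤ ε := (by positivity : 0 ≤ r * cos θ).trans hε1
  have h0 : (0 : ℝ²) ∈ (cthickening ε (arc r θ))ᶜ := zero_mem_compl_cthickening_arc hε0 hε2
  have hbdd := isBounded_ball.subset
    ((connectedComponentIn_zero_subset_ball_inter hr hc.le hs hε1 hε2).trans inter_subset_left)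
  refine ⟨⟨_, ⟨⟨0, h0, rfl⟩, hbdd⟩, ?_⟩, h0, hbdd⟩
  rintro C ⟨⟨p, hp, rfl⟩, hC⟩
  refine (connectedComponentIn_eq ?_).symm
  rcases le_or_gt r ‖p‖ with hpr | hpr
  · exact absurd hC (not_isBounded_connectedComponentIn_of_le_norm hr hε0 hp hpr)
  rcases le_or_gt (r * sin θ) (p 1) with htop | htop
  · exact absurd hC (not_isBounded_connectedComponentIn_of_le_apply_one hε0 hp htop)
  rcases le_or_gt (p 1) (‖p‖ * sin θ) with hp1 | hp1
  · exact mem_connectedComponentIn_zero_of_apply_one_le hr hε0 hp hpr hp1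
  · exact mem_connectedComponentIn_zero_of_lt_apply_one hr hc hs hε0 hp hp1 htop
end

section
/- If 0 ≤ ε < r·cos θ, then the complement ℝ³ \ S_ε of the closed ε-neighborhood of the sphere-with-cap-removed is a connected set. -/
/-!
Since `S` lies on the sphere of radius `r` about the origin and `ε < r`, every closed `ε`-ball
about a point of `S` that meets a ray from the origin contains the point of that ray at distance
`√(r² - ε²)` from the origin. Hence `S_ε` meets each ray in an interval, and every point of the
complement is joined radially either to the origin or to the exterior `{q | r + ε < ‖q‖}`, which
is connected. Finally, `ε < r cos θ` makes the ray through the north pole miss `S_ε`, so it joins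
the origin to the exterior.
-/

open Metric Set

theorem IsCompact.mem_cthickening_iff_exists_dist_le {α : Type*} [PseudoMetricSpace α]
    {S : Set α} {ε : ℝ} (hS : IsCompact S) (hε : 0 ≤ ε) {q : α} :
    q ∈ cthickening ε S ↔ ∃ x ∈ S, dist q x ≤ ε := by
  simp [hS.cthickening_eq_biUnion_closedBall hε]

theorem setOf_lt_norm_subset_compl_cthickening {E : Type*} [SeminormedAddCommGroup E]
    {S : Set E} {r ε : ℝ} (hS : IsCompact S) (hSr : S ⊆ sphere 0 r) (hε : 0 ≤ ε) :
    {q : E | r + ε < ‖q‖} ⊆ (cthickening ε S)ᶜ := by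
  intro q hq hqS
  change r + ε < ‖q‖ at hq
  obtain ⟨x, hx, hqx⟩ := (hS.mem_cthickening_iff_exists_dist_le hε).1 hqS
  have hxr : ‖x‖ = r := by simpa using hSr hx
  have := norm_sub_norm_le q x
  rw [← dist_eq_norm] at this
  linarith

theorem isPreconnected_setOf_lt_norm {E : Type*} [NormedAddCommGroup E] [NormedSpace ℝ E]
    (hE : 1 < Module.rank ℝ E) {R : ℝ} (hR : 0 ≤ R) : IsPreconnected {x : E | R < ‖x‖} := by
  have : {x : E | R < ‖x‖} = (fun p : E × ℝ => p.2 • p.1) '' (sphere 0 1 ×ˢ Ioi R) := by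
    ext x
    constructor
    · intro hx
      have hx0 : x ≠ 0 := norm_pos_iff.1 (hR.trans_lt hx)
      exact ⟨(‖x‖⁻¹ • x, ‖x‖), ⟨by simp [norm_smul, hx0], hx⟩, by simp [smul_smul, hx0]⟩
    · rintro ⟨⟨u, s⟩, ⟨hu, hs⟩, rfl⟩
      simp only [mem_sphere_iff_norm, sub_zero, mem_Ioi] at hu hs
      simp [norm_smul, hu, abs_of_pos (hR.trans_lt hs), hs]
  rw [this]
  exact ((isPreconnected_sphere hE 0 1).prod isPreconnected_Ioi).image _
    (by fun_prop : Continuous fun p : E × ℝ => p.2 • p.1).continuousOn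

theorem sq_sub_two_mul_add_le_of_mem_uIcc {r ε m t a c : ℝ} (hm : m ^ 2 + ε ^ 2 = r ^ 2)
    (hm0 : 0 ≤ m) (ha : 0 ≤ a) (hfa : a ^ 2 - 2 * a * t + r ^ 2 ≤ ε ^ 2) (hc : c ∈ uIcc a m) :
    c ^ 2 - 2 * c * t + r ^ 2 ≤ ε ^ 2 := by
  have hfm : m ^ 2 - 2 * m * t + r ^ 2 ≤ ε ^ 2 := by
    by_contra! h
    have hmt : t < m := by nlinarith
    rcases ha.eq_or_lt with rfl | ha'
    · nlinarith [mul_pos (sub_pos.2 hmt) (sub_pos.2 hmt)]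
    · nlinarith [mul_pos ha' (sub_pos.2 hmt), sq_nonneg (a - m)]
  have hca : c ^ 2 - 2 * c * t = a ^ 2 - 2 * a * t + (c - a) * (c + a - 2 * t) := by ring
  have hcm : c ^ 2 - 2 * c * t = m ^ 2 - 2 * m * t + (c - m) * (c + m - 2 * t) := by ring
  rcases le_total a m with h | h
  · rw [uIcc_of_le h, mem_Icc] at hc
    rcases le_total (c + a) (2 * t) with h' | h'
    · nlinarith [mul_nonneg (sub_nonneg.2 hc.1) (sub_nonneg.2 h')]
    · nlinarith [mul_nonneg (sub_nonneg.2 hc.2) (show 0 ≤ c + m - 2 * t by linarith)]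
  · rw [uIcc_of_ge h, mem_Icc] at hc
    rcases le_total (c + m) (2 * t) with h' | h'
    · nlinarith [mul_nonneg (sub_nonneg.2 hc.1) (sub_nonneg.2 h')]
    · nlinarith [mul_nonneg (sub_nonneg.2 hc.2) (show 0 ≤ c + a - 2 * t by linarith)]

section InnerProductSpace

variable {E : Type*} [NormedAddCommGroup E] [InnerProductSpace ℝ E]

theorem dist_smul_sq_of_norm_eq_one {u : E} (hu : ‖u‖ = 1) (s : ℝ) (x : E) :
    dist (s • u) x ^ 2 = s ^ 2 - 2 * s * inner ℝ u x + ‖x‖ ^ 2 := by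
  rw [dist_eq_norm, norm_sub_sq_real, norm_smul, hu, real_inner_smul_left, Real.norm_eq_abs,
    mul_one, sq_abs]
  ring

variable {S : Set E} {r ε : ℝ}

theorem ordConnected_setOf_smul_mem_cthickening (hS : IsCompact S) (hSr : S ⊆ sphere 0 r)
    (hε : 0 ≤ ε) (hεr : ε ≤ r) {u : E} (hu : ‖u‖ = 1) :
    OrdConnected {s : ℝ | 0 ≤ s ∧ s • u ∈ cthickening ε S} := by
  set m := √(r ^ 2 - ε ^ 2)
  have hm0 : 0 ≤ m := Real.sqrt_nonneg _
  have hm : m ^ 2 + ε ^ 2 = r ^ 2 := by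
    rw [Real.sq_sqrt (by nlinarith)]
    ring
  have key : ∀ a c, 0 ≤ a → a • u ∈ cthickening ε S → c ∈ uIcc a m →
      c • u ∈ cthickening ε S := by
    intro a c ha haS hc
    rw [hS.mem_cthickening_iff_exists_dist_le hε] at haS ⊢
    obtain ⟨x, hx, hax⟩ := haS
    have hxr : ‖x‖ = r := by simpa using hSr hx
    rw [← sq_le_sq₀ dist_nonneg hε, dist_smul_sq_of_norm_eq_one hu, hxr] at hax
    refine ⟨x, hx, (sq_le_sq₀ dist_nonneg hε).1 ?_⟩
    rw [dist_smul_sq_of_norm_eq_one hu, hxr]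
    exact sq_sub_two_mul_add_le_of_mem_uIcc hm hm0 ha hax hc
  refine ⟨fun a ha b hb c hc => ⟨ha.1.trans hc.1, ?_⟩⟩
  rcases le_total c m with hcm | hmc
  · exact key a c ha.1 ha.2 (Icc_subset_uIcc ⟨hc.1, hcm⟩)
  · exact key b c hb.1 hb.2 (Icc_subset_uIcc' ⟨hmc, hc.2⟩)

theorem image_smul_Ici_subset_compl_cthickening (hS : IsCompact S) (hSr : S ⊆ sphere 0 r)
    {e : E} (he : ‖e‖ = 1) {h : ℝ} (hSe : ∀ x ∈ S, inner ℝ e x ≤ h) (hε : 0 ≤ ε)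
    (hεh : ε ^ 2 + h ^ 2 < r ^ 2) : (· • e) '' Ici (0 : ℝ) ⊆ (cthickening ε S)ᶜ := by
  rintro _ ⟨s, hs, rfl⟩ hsS
  obtain ⟨x, hx, hsx⟩ := (hS.mem_cthickening_iff_exists_dist_le hε).1 hsS
  have hdist := dist_smul_sq_of_norm_eq_one he s x
  rw [show ‖x‖ = r by simpa using hSr hx] at hdist
  nlinarith [sq_nonneg (s - h), mul_nonneg (mem_Ici.1 hs) (sub_nonneg.2 (hSe x hx)),
    pow_le_pow_left₀ dist_nonneg hsx 2]

theorem exists_isPreconnected_subset_compl_cthickening (hS : IsCompact S)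
    (hSr : S ⊆ sphere 0 r) (hε : 0 ≤ ε) (hεr : ε ≤ r) {p : E} (hp : p ∉ cthickening ε S)
    (R : ℝ) :
    ∃ t ⊆ (cthickening ε S)ᶜ, IsPreconnected t ∧ p ∈ t ∧ (0 ∈ t ∨ ∃ q ∈ t, R < ‖q‖) := by
  rcases eq_or_ne p 0 with rfl | hp0
  · exact ⟨{0}, singleton_subset_iff.2 hp, isPreconnected_singleton, rfl, Or.inl rfl⟩
  set u := ‖p‖⁻¹ • p
  have hu : ‖u‖ = 1 := norm_smul_inv_norm hp0
  have hpu : ‖p‖ • u = p := by simp [u, smul_smul, hp0]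
  have hray : (∀ s, ‖p‖ ≤ s → s • u ∉ cthickening ε S) ∨
      ∀ s, 0 ≤ s → s ≤ ‖p‖ → s • u ∉ cthickening ε S := by
    by_contra! h
    obtain ⟨⟨b, hpb, hb⟩, ⟨a, ha, hap, ha'⟩⟩ := h
    have := (ordConnected_setOf_smul_mem_cthickening hS hSr hε hεr hu).out ⟨ha, ha'⟩
      ⟨(norm_nonneg p).trans hpb, hb⟩ ⟨hap, hpb⟩
    exact hp (hpu ▸ this.2)
  rcases hray with hout | hin
  · refine ⟨(· • u) '' Ici ‖p‖, ?_, isPreconnected_Ici.image _ (by fun_prop),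
      ⟨‖p‖, self_mem_Ici, hpu⟩,
      Or.inr ⟨max ‖p‖ (R + 1) • u, mem_image_of_mem _ (le_max_left _ _ : ‖p‖ ≤ _), ?_⟩⟩
    · rintro _ ⟨s, hs, rfl⟩
      exact hout s hs
    · rw [norm_smul, hu, mul_one, Real.norm_of_nonneg ((norm_nonneg p).trans (le_max_left _ _))]
      exact lt_max_of_lt_right (lt_add_one R)
  · refine ⟨(· • u) '' Icc 0 ‖p‖, ?_, isPreconnected_Icc.image _ (by fun_prop),
      ⟨‖p‖, right_mem_Icc.2 (norm_nonneg p), hpu⟩,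
      Or.inl ⟨0, left_mem_Icc.2 (norm_nonneg p), zero_smul _ _⟩⟩
    rintro _ ⟨s, hs, rfl⟩
    exact hin s hs.1 hs.2

theorem isConnected_compl_cthickening_of_image_smul_Ici_subset (hE : 1 < Module.rank ℝ E)
    (hS : IsCompact S) (hSr : S ⊆ sphere 0 r) (hε : 0 ≤ ε) (hεr : ε ≤ r) {e : E}
    (he : ‖e‖ = 1) (hray : (· • e) '' Ici (0 : ℝ) ⊆ (cthickening ε S)ᶜ) :
    IsConnected (cthickening ε S)ᶜ := by
  set core := (· • e) '' Ici (0 : ℝ) ∪ {q | r + ε < ‖q‖}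
  have hcoreU : core ⊆ (cthickening ε S)ᶜ :=
    union_subset hray (setOf_lt_norm_subset_compl_cthickening hS hSr hε)
  have hcore : IsPreconnected core := by
    have hR : 0 ≤ r + ε + 1 := by linarith
    refine IsPreconnected.union ((r + ε + 1) • e) (mem_image_of_mem _ hR) ?_
      (isPreconnected_Ici.image _ (by fun_prop)) (isPreconnected_setOf_lt_norm hE (by linarith))
    change r + ε < ‖(r + ε + 1) • e‖
    rw [norm_smul, he, mul_one, Real.norm_of_nonneg hR]
    linarith
  have h0 : (0 : E) ∈ core := Or.inl ⟨0, self_mem_Ici, zero_smul _ _⟩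
  refine ⟨⟨0, hcoreU h0⟩, isPreconnected_of_forall 0 fun p hp => ?_⟩
  obtain ⟨t, htU, ht, hpt, h0t | ⟨q, hqt, hq⟩⟩ :=
    exists_isPreconnected_subset_compl_cthickening hS hSr hε hεr hp (r + ε)
  · exact ⟨t ∪ core, union_subset htU hcoreU, Or.inr h0, Or.inl hpt, ht.union 0 h0t h0 hcore⟩
  · exact ⟨t ∪ core, union_subset htU hcoreU, Or.inr h0, Or.inl hpt,
      ht.union q hqt (Or.inr hq) hcore⟩

end InnerProductSpace

theorem sphere_with_cap_removed_complement_connected_before_birth_general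
    (r θ ε : ℝ) (hr : 0 < r)
    (S : Set (EuclideanSpace ℝ (Fin 3)))
    (hS : S = {p : EuclideanSpace ℝ (Fin 3) | ‖p‖ = r ∧ p 2 ≤ r * Real.sin θ})
    (hε0 : 0 ≤ ε) (hε : ε < r * Real.cos θ) :
    IsConnected (Metric.cthickening ε S)ᶜ := by
  have hSr : S ⊆ sphere 0 r := fun x hx => by simpa [hS] using (hS ▸ hx).1
  have hSc : IsCompact S := (isCompact_sphere 0 r).of_isClosed_subset (hS ▸
    (isClosed_eq continuous_norm continuous_const).inter
      (isClosed_le (EuclideanSpace.proj 2).continuous continuous_const)) hSr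
  have hεr : ε ≤ r := hε.le.trans (mul_le_of_le_one_right hr.le (Real.cos_le_one θ))
  set e : EuclideanSpace ℝ (Fin 3) := EuclideanSpace.single 2 1
  have he : ‖e‖ = 1 := by simp [e]
  refine isConnected_compl_cthickening_of_image_smul_Ici_subset
    (by rw [← Module.finrank_eq_rank]; simp) hSc hSr hε0 hεr he ?_
  refine image_smul_Ici_subset_compl_cthickening hSc hSr he (h := r * Real.sin θ)
    (fun x hx => by simpa [e, EuclideanSpace.inner_single_left] using (hS ▸ hx).2) hε0 ?_
  nlinarith [Real.sin_sq_add_cos_sq θ, mul_self_lt_mul_self hε0 hε]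

/-- If `0 ≤ ε < r·cos θ`, then the complement of the closed
`ε`-neighborhood of the sphere-with-cap-removed is connected. -/
theorem sphere_with_cap_removed_complement_connected_before_birth
    (r θ ε : ℝ) (hr : 0 < r) (hθ : θ ∈ Set.Ioo 0 (Real.pi / 2))
    (S : Set (EuclideanSpace ℝ (Fin 3)))
    (hS : S = {p : EuclideanSpace ℝ (Fin 3) | ‖p‖ = r ∧ p 2 ≤ r * Real.sin θ})
    (hε0 : 0 ≤ ε) (hε : ε < r * Real.cos θ) :
    IsConnected (Metric.cthickening ε S)ᶜ :=
  sphere_with_cap_removed_complement_connected_before_birth_general r θ ε hr S hS hε0 hε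
end

section
/- If ε ≥ 1/2 − ρ, then the closed ε-neighborhood S_ε is a connected set. -/
open Metric Set Bornology

/-- The vertices of the unit equilateral triangle. -/
noncomputable def v0 : EuclideanSpace ℝ (Fin 2) :=
  (WithLp.equiv 2 (Fin 2 → ℝ)).symm ![0, 0]

noncomputable def v1 : EuclideanSpace ℝ (Fin 2) :=
  (WithLp.equiv 2 (Fin 2 → ℝ)).symm ![1, 0]

noncomputable def v2 : EuclideanSpace ℝ (Fin 2) :=
  (WithLp.equiv 2 (Fin 2 → ℝ)).symm ![1 / 2, Real.sqrt 3 / 2]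

/-- The homothety with center `v0` (resp. `v1`, `v2`) and ratio `ρ`. -/
noncomputable def f0 (ρ : ℝ) (x : EuclideanSpace ℝ (Fin 2)) : EuclideanSpace ℝ (Fin 2) :=
  v0 + ρ • (x - v0)

noncomputable def f1 (ρ : ℝ) (x : EuclideanSpace ℝ (Fin 2)) : EuclideanSpace ℝ (Fin 2) :=
  v1 + ρ • (x - v1)

noncomputable def f2 (ρ : ℝ) (x : EuclideanSpace ℝ (Fin 2)) : EuclideanSpace ℝ (Fin 2) :=
  v2 + ρ • (x - v2)

/-- The union of the images of a set under the three homotheties. -/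
noncomputable def sierpPhi (ρ : ℝ) (X : Set (EuclideanSpace ℝ (Fin 2))) :
    Set (EuclideanSpace ℝ (Fin 2)) :=
  f0 ρ '' X ∪ f1 ρ '' X ∪ f2 ρ '' X

/-- The filled equilateral triangle. -/
noncomputable def sierpT : Set (EuclideanSpace ℝ (Fin 2)) :=
  convexHull ℝ {v0, v1, v2}

/-- The generalized Sierpinski triangle with contraction ratio `ρ`. -/
noncomputable def sierpinski (ρ : ℝ) : Set (EuclideanSpace ℝ (Fin 2)) :=
  ⋂ k : ℕ, (sierpPhi ρ)^[k] sierpT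

/-!
The stages `Φᵏ(T)` are compact and decreasing, so the closed `ε`-neighbourhood of their
intersection `S` is the intersection of their `ε`-neighbourhoods, and a decreasing intersection
of compact connected sets is connected. Connectedness of each `(Φᵏ T)_δ` for all
`δ ≥ 1/2 - ρ` follows by induction on `k`: a homothety of ratio `ρ` maps `(Φᵏ T)_{δ/ρ}` onto
the `δ`-neighbourhood of the corresponding piece of `Φᵏ⁺¹ T`, with `δ/ρ ≥ δ`, and two pieces
are joined because the images of two vertices, `fᵢ(vⱼ)` and `fⱼ(vᵢ)`, lie at distance
`1 - 2ρ ≤ 2δ`.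
-/

theorem IsConnected.iInter_of_directed_isCompact {X ι : Type*} [TopologicalSpace X] [T2Space X]
    [Nonempty ι] {K : ι → Set X} (hdir : Directed (· ⊇ ·) K) (hK : ∀ i, IsCompact (K i))
    (hconn : ∀ i, IsConnected (K i)) : IsConnected (⋂ i, K i) := by
  set S := ⋂ i, K i
  have hS : IsClosed S := isClosed_iInter fun i => (hK i).isClosed
  have hSc : IsCompact S := (hK (Classical.arbitrary ι)).of_isClosed_subset hS (iInter_subset _ _)
  refine ⟨IsCompact.nonempty_iInter_of_directed_nonempty_isCompact_isClosed K hdir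
    (fun i => (hconn i).nonempty) hK fun i => (hK i).isClosed,
    (isPreconnected_iff_subset_of_fully_disjoint_closed hS).2 fun u v hu hv hSuv huv => ?_⟩
  -- Separate the two halves of `S` by open sets; some connected `K i` lies in their union.
  obtain ⟨u', v', hu', hv', hSu, hSv, huv'⟩ := SeparatedNhds.of_isCompact_isCompact
    (hSc.inter_right hu) (hSc.inter_right hv) (huv.mono inter_subset_right inter_subset_right)
  have hcover : S ⊆ u' ∪ v' := fun x hx =>
    (hSuv hx).imp (fun h => hSu ⟨hx, h⟩) fun h => hSv ⟨hx, h⟩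
  obtain ⟨i, hi⟩ : ∃ i, K i ⊆ u' ∪ v' := exists_subset_nhds_of_isCompact hdir hK fun x hx =>
    (hu'.union hv').mem_nhds (hcover hx)
  rcases (hconn i).isPreconnected.subset_or_subset hu' hv' huv' hi with h | h
  · refine .inl fun x hx => (hSuv hx).resolve_right fun hxv => ?_
    exact huv'.notMem_of_mem_left (h (iInter_subset K i hx)) (hSv ⟨hx, hxv⟩)
  · refine .inr fun x hx => (hSuv hx).resolve_left fun hxu => ?_
    exact huv'.notMem_of_mem_right (h (iInter_subset K i hx)) (hSu ⟨hx, hxu⟩)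

theorem Metric.cthickening_iInter_of_directed_isCompact {α ι : Type*} [EMetricSpace α]
    [Nonempty ι] {K : ι → Set α} (hdir : Directed (· ⊇ ·) K) (hK : ∀ i, IsCompact (K i))
    (δ : ℝ) : cthickening δ (⋂ i, K i) = ⋂ i, cthickening δ (K i) := by
  refine (subset_iInter fun i => cthickening_subset_of_subset δ (iInter_subset K i)).antisymm
    fun x hx => ?_
  set B := closedEBall x (ENNReal.ofReal δ)
  have hKB : ∀ i, (K i ∩ B).Nonempty := fun i => by
    have hxi := mem_iInter.1 hx i
    have hne : (K i).Nonempty :=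
      (K i).eq_empty_or_nonempty.resolve_left fun h => by simp [h] at hxi
    obtain ⟨y, hy, hxy⟩ := (hK i).exists_infEDist_eq_edist hne x
    exact ⟨y, hy, mem_closedEBall'.2 (hxy ▸ mem_cthickening_iff.1 hxi)⟩
  obtain ⟨y, hy⟩ := IsCompact.nonempty_iInter_of_directed_nonempty_isCompact_isClosed _
    (hdir.mono_comp _ fun _ _ h => inter_subset_inter_left B h) hKB
    (fun i => (hK i).inter_right isClosed_closedEBall)
    fun i => (hK i).isClosed.inter isClosed_closedEBall
  simp only [Function.comp_apply, ← iInter_inter] at hy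
  exact mem_cthickening_of_edist_le x y δ _ hy.1 (mem_closedEBall'.1 hy.2)

open AffineMap

section Homothety

variable {E : Type*} [NormedAddCommGroup E] [NormedSpace ℝ E]

theorem infEDist_homothety_image (c x : E) {r : ℝ} (hr : r ≠ 0) (s : Set E) :
    infEDist (homothety c r x) (homothety c r '' s) = ‖r‖₊ * infEDist x s := by
  have h : ⇑(homothety c r) = (c +ᵥ ·) ∘ (r • ·) ∘ (-c +ᵥ ·) := by
    funext y
    simp [homothety_apply, vadd_eq_add, sub_eq_neg_add, add_comm]
  rw [h, image_comp, image_comp, image_vadd, image_smul, image_vadd]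
  simp only [Function.comp_apply, infEDist_vadd, infEDist_smul₀ hr, ENNReal.smul_def, smul_eq_mul]

theorem cthickening_homothety_image (c : E) {r : ℝ} (hr : 0 < r) (δ : ℝ) (s : Set E) :
    cthickening δ (homothety c r '' s) = homothety c r '' cthickening (δ / r) s := by
  have hinv : ∀ {t : ℝ}, t ≠ 0 → ∀ x, homothety c t (homothety c t⁻¹ x) = x := fun ht x => by
    rw [← homothety_mul_apply, mul_inv_cancel₀ ht, homothety_one, id_apply]
  have hinj : Function.Injective (homothety c r) :=
    Function.LeftInverse.injective (g := homothety c r⁻¹) fun x => by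
      simpa using hinv (inv_ne_zero hr.ne') x
  ext z
  obtain ⟨x, rfl⟩ : ∃ x, homothety c r x = z := ⟨_, hinv hr.ne' z⟩
  rw [hinj.mem_set_image, mem_cthickening_iff, mem_cthickening_iff,
    infEDist_homothety_image c x hr.ne',
    Real.nnnorm_of_nonneg hr.le, ← ENNReal.ofReal_eq_coe_nnreal hr.le, ENNReal.ofReal_div_of_pos hr,
    ENNReal.le_div_iff_mul_le (.inl (by simpa using hr)) (.inl ENNReal.ofReal_ne_top), mul_comm]

theorem dist_homothety_homothety_swap (p q : E) (r : ℝ) :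
    dist (homothety p r q) (homothety q r p) = |1 - 2 * r| * dist p q := by
  have h : homothety p r q - homothety q r p = (1 - 2 * r) • (p - q) := by
    simp only [homothety_apply, vsub_eq_sub, vadd_eq_add]
    module
  rw [dist_eq_norm, h, norm_smul, Real.norm_eq_abs, dist_eq_norm]

end Homothety

theorem Metric.cthickening_inter_cthickening_nonempty_of_dist_le {E : Type*}
    [NormedAddCommGroup E] [NormedSpace ℝ E] {s t : Set E} {x y : E} (hx : x ∈ s) (hy : y ∈ t)
    {δ : ℝ} (hxy : dist x y ≤ 2 * δ) : (cthickening δ s ∩ cthickening δ t).Nonempty := by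
  have hmid : dist x y / 2 ≤ δ := by linarith
  refine ⟨midpoint ℝ x y, mem_cthickening_of_dist_le _ x _ _ hx ?_,
    mem_cthickening_of_dist_le _ y _ _ hy ?_⟩
  · simpa [dist_midpoint_left, div_eq_inv_mul] using hmid
  · simpa [dist_midpoint_right, div_eq_inv_mul] using hmid

lemma dist_v0_v1 : dist v0 v1 = 1 := by
  simp [EuclideanSpace.dist_eq, v0, v1]

lemma dist_v0_v2 : dist v0 v2 = 1 := by
  simp [EuclideanSpace.dist_eq, v0, v2, div_pow, Real.dist_eq]
  norm_num

lemma dist_v1_v2 : dist v1 v2 = 1 := by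
  simp [EuclideanSpace.dist_eq, v1, v2, div_pow, Real.dist_eq]
  norm_num

lemma sierpPhi_eq_union_homothety (ρ : ℝ) (X : Set (EuclideanSpace ℝ (Fin 2))) :
    sierpPhi ρ X = homothety v0 ρ '' X ∪ homothety v1 ρ '' X ∪ homothety v2 ρ '' X := by
  have h : ∀ c : EuclideanSpace ℝ (Fin 2), (fun x => c + ρ • (x - c)) = ⇑(homothety c ρ) :=
    fun c => funext fun x => by rw [homothety_apply, vsub_eq_sub, vadd_eq_add, add_comm]
  unfold sierpPhi f0 f1 f2
  rw [h v0, h v1, h v2]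

lemma sierpPhi_mono (ρ : ℝ) : Monotone (sierpPhi ρ) := fun X Y h => by
  simp only [sierpPhi_eq_union_homothety]
  gcongr

lemma IsCompact.sierpPhi {X : Set (EuclideanSpace ℝ (Fin 2))} (hX : IsCompact X) (ρ : ℝ) :
    IsCompact (sierpPhi ρ X) := by
  rw [sierpPhi_eq_union_homothety]
  exact ((hX.image (homothety_continuous _ _)).union (hX.image (homothety_continuous _ _))).union
    (hX.image (homothety_continuous _ _))

lemma vertices_subset_sierpT : {v0, v1, v2} ⊆ sierpT := subset_convexHull ℝ _

lemma vertices_subset_sierpPhi {ρ : ℝ} {X : Set (EuclideanSpace ℝ (Fin 2))}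
    (hX : {v0, v1, v2} ⊆ X) : {v0, v1, v2} ⊆ sierpPhi ρ X := by
  rw [sierpPhi_eq_union_homothety]
  rintro v (rfl | rfl | rfl)
  · exact .inl (.inl ⟨v0, hX (by simp), homothety_apply_same _ _⟩)
  · exact .inl (.inr ⟨v1, hX (by simp), homothety_apply_same _ _⟩)
  · exact .inr ⟨v2, hX (by simp), homothety_apply_same _ _⟩

lemma sierpPhi_sierpT_subset {ρ : ℝ} (hρ : ρ ∈ Icc (0 : ℝ) 1) : sierpPhi ρ sierpT ⊆ sierpT := by
  have hT : ∀ c ∈ sierpT, homothety c ρ '' sierpT ⊆ sierpT := fun c hc =>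
    image_subset_iff.2 fun x hx => by
      rw [mem_preimage, homothety_eq_lineMap]
      exact (convex_convexHull ℝ _).lineMap_mem hc hx hρ
  rw [sierpPhi_eq_union_homothety]
  exact union_subset (union_subset (hT v0 (vertices_subset_sierpT (by simp)))
    (hT v1 (vertices_subset_sierpT (by simp)))) (hT v2 (vertices_subset_sierpT (by simp)))

lemma isConnected_cthickening_sierpPhi {ρ δ : ℝ} (hρ0 : 0 < ρ) (hρ : ρ ≤ 1 / 2)
    (hδ : 1 / 2 - ρ ≤ δ) {X : Set (EuclideanSpace ℝ (Fin 2))} (hV : {v0, v1, v2} ⊆ X)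
    (hX : IsConnected (cthickening (δ / ρ) X)) : IsConnected (cthickening δ (sierpPhi ρ X)) := by
  have piece : ∀ c, IsConnected (cthickening δ (homothety c ρ '' X)) := fun c => by
    rw [cthickening_homothety_image c hρ0]
    exact hX.image _ (homothety_continuous c ρ).continuousOn
  have bridge : ∀ {p q}, p ∈ X → q ∈ X → dist p q = 1 →
      (cthickening δ (homothety p ρ '' X) ∩ cthickening δ (homothety q ρ '' X)).Nonempty :=
    fun hp hq hpq => cthickening_inter_cthickening_nonempty_of_dist_le (mem_image_of_mem _ hq)
      (mem_image_of_mem _ hp) (by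
        rw [dist_homothety_homothety_swap, hpq, mul_one, abs_of_nonneg (by linarith)]
        linarith)
  have h0 : v0 ∈ X := hV (by simp)
  rw [sierpPhi_eq_union_homothety, cthickening_union, cthickening_union]
  refine ((piece v0).union (bridge h0 (hV (by simp)) dist_v0_v1) (piece v1)).union ?_ (piece v2)
  exact (bridge h0 (hV (by simp)) dist_v0_v2).mono (inter_subset_inter_left _ subset_union_left)

lemma isCompact_iterate_sierpPhi (ρ : ℝ) (k : ℕ) : IsCompact ((sierpPhi ρ)^[k] sierpT) := by
  induction k with
  | zero => exact (finite_singleton v2 |>.insert v1 |>.insert v0).isCompact_convexHull ℝ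
  | succ k ih => rw [Function.iterate_succ_apply']; exact ih.sierpPhi ρ

lemma vertices_subset_iterate_sierpPhi (ρ : ℝ) (k : ℕ) :
    {v0, v1, v2} ⊆ (sierpPhi ρ)^[k] sierpT := by
  induction k with
  | zero => exact vertices_subset_sierpT
  | succ k ih => rw [Function.iterate_succ_apply']; exact vertices_subset_sierpPhi ih

lemma isConnected_cthickening_iterate_sierpPhi {ρ : ℝ} (hρ0 : 0 < ρ) (hρ : ρ ≤ 1 / 2) (k : ℕ)
    {δ : ℝ} (hδ : 1 / 2 - ρ ≤ δ) : IsConnected (cthickening δ ((sierpPhi ρ)^[k] sierpT)) := by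
  induction k generalizing δ with
  | zero =>
    exact ((convex_convexHull ℝ _).cthickening δ).isConnected
      ⟨v0, self_subset_cthickening _ (vertices_subset_sierpT (by simp))⟩
  | succ k ih =>
    rw [Function.iterate_succ_apply']
    exact isConnected_cthickening_sierpPhi hρ0 hρ hδ (vertices_subset_iterate_sierpPhi ρ k)
      (ih (hδ.trans (le_div_self (by linarith) hρ0 (by linarith))))

/-- If `ε ≥ 1/2 − ρ`, then the closed `ε`-neighborhood `S_ε` is a
connected set. -/
theorem sierpinski_cthickening_connected
    (ρ : ℝ) (hρ0 : 0 < ρ) (hρ : ρ ≤ 1 / 2) (ε : ℝ) (hε : 1 / 2 - ρ ≤ ε) :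
    IsConnected (Metric.cthickening ε (sierpinski ρ)) := by
  have hanti : Antitone fun k => (sierpPhi ρ)^[k] sierpT :=
    (sierpPhi_mono ρ).antitone_iterate_of_map_le (sierpPhi_sierpT_subset ⟨hρ0.le, by linarith⟩)
  rw [sierpinski, cthickening_iInter_of_directed_isCompact hanti.directed_ge
    (isCompact_iterate_sierpPhi ρ)]
  have hanti_ε : Antitone fun k => cthickening ε ((sierpPhi ρ)^[k] sierpT) :=
    fun _ _ h => cthickening_subset_of_subset ε (hanti h)
  exact IsConnected.iInter_of_directed_isCompact hanti_ε.directed_ge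
    (fun k => (isCompact_iterate_sierpPhi ρ k).cthickening)
    fun k => isConnected_cthickening_iterate_sierpPhi hρ0 hρ k hε
end
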